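/- arXiv:math/0410051 — 7 statements merged into one kernel-verified Lean document; each statement's English description precedes it below -/
import Mathlib

section
/- For integers 1 ≤ i ≤ n, the sum over all tuples (n_1, ..., n_i, m) with n_j ≥ 1 integers, m ≥ 0 an integer, and n_1 + ... + n_i + m = n, of (∏_{j=1}^{i} n_j^(n_j-1)/n_j!) · m^m/m! equals n^(n-i)/(n-i)!, with the convention 0^0 = 1. -/
/-!
Splitting off the first part `k` of a composition turns the sum for `i + 1` parts into the
convolution `∑ k, k^(k-1)/k! · S_i(n - k)`, so by induction on `i` everything reduces to
`∑_{k=1}^N C(N,k) k^(k-1) (z-k)^(N-k) = N z^(N-1)`, a degenerate case of Abel's binomial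
identity. Both sides are polynomials in `z` whose derivatives satisfy the same recursion
`P_{N+1}' = (N+1) P_N`, and they agree at `z = 0`, where the left side becomes the alternating
sum `∑ (-1)^(N+1-k) C(N+1,k) k^N`, an `(N+1)`-st forward difference of `x ↦ x^N`.
-/

open Finset Polynomial

theorem sum_range_neg_one_pow_mul_choose_mul_pow_eq_zero {R : Type*} [CommRing R] {j n : ℕ}
    (h : j < n) : ∑ k ∈ range (n + 1), (-1 : R) ^ (n - k) * n.choose k * (k : R) ^ j = 0 := by
  have h0 := fwdDiff_iter_eq_sum_shift (1 : R) (fun r : R ↦ r ^ j) n 0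
  rw [fwdDiff_iter_pow_eq_zero_of_lt h] at h0
  simpa [zsmul_eq_mul] using h0.symm

theorem Polynomial.eq_of_derivative_eq_of_eval_eq {R : Type*} [CommRing R] [IsAddTorsionFree R]
    {p q : R[X]} (hd : derivative p = derivative q) (a : R) (he : p.eval a = q.eval a) :
    p = q := by
  have hconst := eq_C_of_derivative_eq_zero (p := p - q) (by rw [derivative_sub, hd, sub_self])
  have hcoeff : (p - q).coeff 0 = 0 := by
    simpa [he] using (congrArg (eval a) hconst).symm
  rw [← sub_eq_zero, hconst, hcoeff, map_zero]

theorem derivative_choose_succ_mul_pow_mul_X_sub_pow (N k : ℕ) :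
    derivative
        (((N + 1).choose k : ℤ[X]) * (k : ℤ[X]) ^ (k - 1) * (X - (k : ℤ[X])) ^ (N + 1 - k)) =
      (N + 1 : ℤ[X]) *
        ((N.choose k : ℤ[X]) * (k : ℤ[X]) ^ (k - 1) * (X - (k : ℤ[X])) ^ (N - k)) := by
  have hchoose : (((N + 1).choose k : ℕ) * (N + 1 - k : ℕ) : ℤ[X]) = (N + 1) * N.choose k := by
    exact_mod_cast ((N.choose_mul_succ_eq k).symm.trans (mul_comm _ _))
  simp only [derivative_mul, derivative_pow, derivative_sub, derivative_X, derivative_natCast,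
    map_natCast, zero_mul, mul_zero, zero_add, sub_zero, mul_one]
  rw [show N + 1 - k - 1 = N - k by omega]
  linear_combination ((k : ℤ[X]) ^ (k - 1) * (X - (k : ℤ[X])) ^ (N - k)) * hchoose

theorem abel_identity_polynomial (N : ℕ) :
    ∑ k ∈ Icc 1 N, (N.choose k : ℤ[X]) * (k : ℤ[X]) ^ (k - 1) * (X - (k : ℤ[X])) ^ (N - k) =
      N * X ^ (N - 1) := by
  induction N with
  | zero => simp
  | succ N ih =>
    refine eq_of_derivative_eq_of_eval_eq ?_ 0 ?_
    · rw [derivative_sum,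
        sum_congr rfl fun k _ ↦ derivative_choose_succ_mul_pow_mul_X_sub_pow N k, ← mul_sum,
        sum_Icc_succ_top (by omega), Nat.choose_succ_self, ih]
      simp [derivative_X_pow]
    rcases eq_or_ne N 0 with rfl | hN
    · simp
    have hterm : ∀ k ∈ Icc 1 (N + 1),
        eval 0
            (((N + 1).choose k : ℤ[X]) * (k : ℤ[X]) ^ (k - 1) * (X - (k : ℤ[X])) ^ (N + 1 - k)) =
          (-1) ^ (N + 1 - k) * (N + 1).choose k * (k : ℤ) ^ N := by
      intro k hk
      have hpow : (k : ℤ) ^ (k - 1) * (k : ℤ) ^ (N + 1 - k) = (k : ℤ) ^ N := by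
        rw [← pow_add]; congr 1; have := mem_Icc.mp hk; omega
      simp only [eval_mul, eval_pow, eval_sub, eval_X, eval_natCast, zero_sub]
      rw [neg_pow, ← hpow]
      ring
    have hsubset : Icc 1 (N + 1) ⊆ range (N + 2) := fun k hk ↦ by
      have := mem_Icc.mp hk; simp only [mem_range]; omega
    rw [eval_finsetSum, sum_congr rfl hterm, sum_subset hsubset fun k hk₂ hk ↦ ?_,
      sum_range_neg_one_pow_mul_choose_mul_pow_eq_zero (Nat.lt_succ_self N)]
    · simp [hN]
    obtain rfl : k = 0 := by simp only [mem_Icc, mem_range, not_and_or] at hk hk₂; omega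
    simp [hN]

theorem abel_identity {R : Type*} [CommRing R] (N : ℕ) (z : R) :
    ∑ k ∈ Icc 1 N, (N.choose k : R) * (k : R) ^ (k - 1) * (z - k) ^ (N - k) =
      N * z ^ (N - 1) := by
  simpa using congrArg (aeval z) (abel_identity_polynomial N)

section CompositionSum

variable {R : Type*} [CommSemiring R] (f g : ℕ → R)

def compositionSum (i n : ℕ) : R :=
  ∑ c ∈ (Nat.antidiagonalTuple (i + 1) n).filter (fun c ↦ ∀ j : Fin i, 1 ≤ c j.castSucc),
    (∏ j : Fin i, f (c j.castSucc)) * g (c (Fin.last i))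

theorem compositionSum_zero (n : ℕ) : compositionSum f g 0 n = g n := by
  simp [compositionSum, Nat.antidiagonalTuple_one, Fin.last]

theorem compositionSum_succ (i n : ℕ) :
    compositionSum f g (i + 1) n = ∑ k ∈ Icc 1 n, f k * compositionSum f g i (n - k) := by
  simp_rw [compositionSum, mul_sum]
  rw [sum_sigma']
  refine sum_nbij' (fun c ↦ ⟨c 0, Fin.tail c⟩) (fun p ↦ Fin.cons p.1 p.2) ?_ ?_
    (fun c _ ↦ Fin.cons_self_tail c) (fun p _ ↦ by simp) ?_
  · intro c hc
    rw [mem_filter, Nat.mem_antidiagonalTuple, Fin.sum_univ_succ] at hc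
    obtain ⟨hsum, hpos⟩ := hc
    have h0 : 1 ≤ c 0 := hpos 0
    have htail : ∑ j : Fin (i + 1), c j.succ = n - c 0 := by omega
    refine mem_sigma.2 ⟨mem_Icc.2 ⟨h0, show c 0 ≤ n by omega⟩,
      mem_filter.2 ⟨Nat.mem_antidiagonalTuple.2 htail, fun j ↦ ?_⟩⟩
    simpa only [Fin.tail, Fin.succ_castSucc] using hpos j.succ
  · rintro ⟨k, d⟩ hp
    obtain ⟨hk, hd⟩ := mem_sigma.1 hp
    obtain ⟨hsum, hpos⟩ := mem_filter.1 hd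
    rw [mem_Icc] at hk
    rw [Nat.mem_antidiagonalTuple] at hsum
    dsimp only at hk hsum
    refine mem_filter.2 ⟨Nat.mem_antidiagonalTuple.2 ?_, Fin.cases ?_ fun j ↦ ?_⟩
    · rw [Fin.sum_univ_succ, Fin.cons_zero]
      simp only [Fin.cons_succ]
      omega
    · simpa using hk.1
    · simpa [← Fin.succ_castSucc] using hpos j
  · intro c _
    simp only [Fin.prod_univ_succ, Fin.tail, Fin.castSucc_zero, Fin.succ_castSucc, Fin.succ_last,
      mul_assoc]

theorem compositionSum_eq_zero_of_lt {i n : ℕ} (h : n < i) : compositionSum f g i n = 0 := by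
  induction i generalizing n with
  | zero => omega
  | succ i ih =>
    rw [compositionSum_succ]
    exact sum_eq_zero fun k hk ↦ by rw [ih (by have := mem_Icc.1 hk; omega), mul_zero]

end CompositionSum

open Nat in
theorem sum_Icc_pow_pred_div_factorial_mul {K : Type*} [Field K] [CharZero K] {N : ℕ}
    (hN : N ≠ 0) (z : K) :
    ∑ k ∈ Icc 1 N, (k : K) ^ (k - 1) / k ! * ((z - k) ^ (N - k) / (N - k)!) =
      z ^ (N - 1) / (N - 1)! := by
  have hterm : ∀ k ∈ Icc 1 N, (k : K) ^ (k - 1) / k ! * ((z - k) ^ (N - k) / (N - k)!) =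
      N.choose k * (k : K) ^ (k - 1) * (z - k) ^ (N - k) / N ! := by
    intro k hk
    have : (N ! : K) ≠ 0 := Nat.cast_ne_zero.2 N.factorial_ne_zero
    rw [Nat.cast_choose K (mem_Icc.1 hk).2]
    field_simp
  rw [sum_congr rfl hterm, ← sum_div, abel_identity, ← Nat.mul_factorial_pred hN]
  push_cast
  field_simp

open Nat in
theorem compositionSum_pow_pred_div_factorial {K : Type*} [Field K] [CharZero K] {i n : ℕ}
    (h : i ≤ n) :
    compositionSum (fun k ↦ (k : K) ^ (k - 1) / k !) (fun m ↦ (m : K) ^ m / m !) i n =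
      n ^ (n - i) / (n - i)! := by
  induction i generalizing n with
  | zero => simp [compositionSum_zero]
  | succ i ih =>
    have hsubset : Icc 1 (n - i) ⊆ Icc 1 n := Icc_subset_Icc_right (by omega)
    rw [compositionSum_succ, ← sum_subset hsubset fun k hk hk' ↦ ?_]
    · calc ∑ k ∈ Icc 1 (n - i), (k : K) ^ (k - 1) / k ! *
            compositionSum (fun k ↦ (k : K) ^ (k - 1) / k !) (fun m ↦ (m : K) ^ m / m !) i (n - k)
          _ = ∑ k ∈ Icc 1 (n - i), (k : K) ^ (k - 1) / k ! *
              (((n : K) - k) ^ (n - i - k) / (n - i - k)!) := sum_congr rfl fun k hk ↦ by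
            have := mem_Icc.1 hk
            rw [ih (by omega), Nat.cast_sub (by omega), show n - k - i = n - i - k by omega]
          _ = n ^ (n - (i + 1)) / (n - (i + 1))! := by
            rw [sum_Icc_pow_pred_div_factorial_mul (by omega), Nat.sub_sub]
    · have hlt : n - k < i := by simp only [mem_Icc] at hk hk'; omega
      rw [compositionSum_eq_zero_of_lt _ _ hlt, mul_zero]

theorem stmt3_general (i n : ℕ) (hin : i ≤ n) :
    ∑ c ∈ (Finset.Nat.antidiagonalTuple (i + 1) n).filter
        (fun c => ∀ j : Fin i, 1 ≤ c j.castSucc),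
      (∏ j : Fin i, ((c j.castSucc : ℚ) ^ (c j.castSucc - 1) / (c j.castSucc).factorial)) *
        ((c (Fin.last i) : ℚ) ^ (c (Fin.last i)) / (c (Fin.last i)).factorial)
    = (n : ℚ) ^ (n - i) / (n - i).factorial :=
  compositionSum_pow_pred_div_factorial hin

/-- Lemma "dominantB": for `1 ≤ i ≤ n`, the sum over tuples `(n_1,…,n_i,m)` with
`n_j ≥ 1`, `m ≥ 0`, `n_1+⋯+n_i+m = n`, of `(∏_j n_j^(n_j-1)/n_j!)·m^m/m!`
equals `n^(n-i)/(n-i)!` (with the convention `0^0 = 1`). -/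
theorem stmt3 (i n : ℕ) (hi : 1 ≤ i) (hin : i ≤ n) :
    ∑ c ∈ (Finset.Nat.antidiagonalTuple (i + 1) n).filter
        (fun c => ∀ j : Fin i, 1 ≤ c j.castSucc),
      (∏ j : Fin i, ((c j.castSucc : ℚ) ^ (c j.castSucc - 1) / (c j.castSucc).factorial)) *
        ((c (Fin.last i) : ℚ) ^ (c (Fin.last i)) / (c (Fin.last i)).factorial)
    = (n : ℚ) ^ (n - i) / (n - i).factorial :=
  stmt3_general i n hin
end

section
/- For every integer n ≥ 1, the polynomial identity Σ_{j=0}^{n} C(n,j) · x · (x-2j)^(j-1) · (-1)^(n-j) · (2(n-j)+1)^(n-j-1) = (x-1)·(x-(2n+1))^(n-1) holds, where the j = 0 term is interpreted as x · x^(-1) · (-1)^n · (2n+1)^(n-1) = (-1)^n (2n+1)^(n-1) and the j = n term is x·(x-2n)^(n-1). -/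
/-!
With `A_m(x) = x (x - m a)^(m-1)` (and `A_0 = 1`), the sum is the binomial expansion
`A_n(x + y) = Σ_j C(n,j) A_j(x) A_{n-j}(y)` for `a = 2`, `y = -1`, since
`A_m(-1) = (-1)^m (2m+1)^(m-1)`. This Abel identity follows by induction on `n`: since
`A_{m+1}' = (m+1) A_m(X - a)`, both sides have derivative `(n+1)` times the previous case
shifted by `a`, and they agree at `x = 0` because `A_j(0) = 0` for `j ≥ 1`.
-/

open Finset

namespace Polynomial

variable {R : Type*} [CommRing R]

theorem eq_of_derivative_eq_of_eval_zero_eq [IsAddTorsionFree R] {p q : R[X]}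
    (hd : derivative p = derivative q) (h0 : p.eval 0 = q.eval 0) : p = q := by
  have hc := eq_C_of_derivative_eq_zero (p := p - q) (by rw [derivative_sub, hd, sub_self])
  rwa [coeff_zero_eq_eval_zero, eval_sub, h0, sub_self, map_zero, sub_eq_zero] at hc

noncomputable def abelPoly (a : R) : ℕ → R[X]
  | 0 => 1
  | m + 1 => X * (X - C ((m + 1 : R) * a)) ^ m

variable (a : R)

@[simp]
theorem abelPoly_zero : abelPoly a 0 = 1 := rfl

theorem abelPoly_succ (m : ℕ) : abelPoly a (m + 1) = X * (X - C ((m + 1 : R) * a)) ^ m := rfl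

theorem eval_abelPoly {m : ℕ} (hm : m ≠ 0) (x : R) :
    (abelPoly a m).eval x = x * (x - m * a) ^ (m - 1) := by
  obtain ⟨k, rfl⟩ := Nat.exists_eq_succ_of_ne_zero hm
  simp [abelPoly_succ]

theorem derivative_abelPoly_succ (m : ℕ) :
    derivative (abelPoly a (m + 1)) = (m + 1 : R[X]) * (abelPoly a m).comp (X - C a) := by
  cases m with
  | zero => simp [abelPoly_succ]
  | succ k =>
    have hroot : (X : R[X]) - C a - C ((k + 1 : R) * a) = X - C ((k + 1 + 1 : R) * a) := by
      simp only [map_add, map_mul, map_natCast, map_one]; ring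
    rw [abelPoly_succ, abelPoly_succ, mul_comp, pow_comp, sub_comp, X_comp, C_comp, hroot,
      derivative_mul, derivative_pow, derivative_sub, derivative_C, derivative_X]
    simp only [map_add, map_mul, map_natCast, map_one]
    push_cast
    ring

theorem abelPoly_comp_X_add_C [IsAddTorsionFree R] (y : R) (n : ℕ) :
    (abelPoly a n).comp (X + C y) =
      ∑ j ∈ range (n + 1), C (n.choose j * (abelPoly a (n - j)).eval y) * abelPoly a j := by
  induction n with
  | zero => simp
  | succ n ih =>
    apply eq_of_derivative_eq_of_eval_zero_eq
    · have hshift : ((X : R[X]) - C a).comp (X + C y) = (X + C y).comp (X - C a) := by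
        simp only [sub_comp, add_comp, X_comp, C_comp]; ring
      rw [derivative_comp, derivative_abelPoly_succ, mul_comp, comp_assoc, hshift, ← comp_assoc,
        ih, derivative_sum, sum_range_succ' _ (n + 1), sum_comp, Finset.mul_sum]
      simp only [derivative_mul, derivative_C, zero_mul, zero_add, abelPoly_zero, derivative_one,
        mul_zero, add_zero, derivative_abelPoly_succ, mul_comp, C_comp, derivative_add,
        derivative_X, one_mul]
      refine sum_congr rfl fun j _ => ?_
      have hchoose : ((n + 1 : ℕ) : R) * n.choose j = (n + 1).choose (j + 1) * ((j : R) + 1) := by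
        exact_mod_cast congrArg (Nat.cast (R := R)) (Nat.add_one_mul_choose_eq n j)
      rw [Nat.add_sub_add_right]
      have hchooseC := congrArg C hchoose
      simp only [map_mul, map_natCast, map_add, map_one, add_comp, natCast_comp, one_comp,
        Nat.cast_add, Nat.cast_one] at hchooseC ⊢
      linear_combination (C (eval y (abelPoly a (n - j))) * (abelPoly a j).comp (X - C a)) * hchooseC
    · simp [eval_finsetSum, sum_range_succ', abelPoly_succ]

theorem eval_neg_one_abelPoly_two (m : ℕ) :
    (abelPoly (2 : R) m).eval (-1) = (-1) ^ m * (2 * (m : R) + 1) ^ (m - 1) := by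
  cases m with
  | zero => simp
  | succ k =>
    rw [abelPoly_succ, Nat.add_sub_cancel, pow_succ, eval_mul, eval_pow, eval_sub, eval_X, eval_C,
      show (-1 : R) - (k + 1) * 2 = -1 * (2 * ((k + 1 : ℕ) : R) + 1) by push_cast; ring, mul_pow]
    ring

end Polynomial

open Polynomial

/-- The identity computing the characteristic polynomial of the poset of pointed
partitions of type `β`: for `n ≥ 1` and all integers `x`,
`(-1)^n(2n+1)^(n-1) + Σ_{j=1}^{n} C(n,j)·x·(x-2j)^(j-1)·(-1)^(n-j)·(2(n-j)+1)^(n-j-1)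
  = (x-1)·(x-(2n+1))^(n-1)`
(the `j = n` term being `C(n,n)·x·(x-2n)^(n-1)`). -/
theorem stmt4 (n : ℕ) (hn : 1 ≤ n) (x : ℤ) :
    (-1) ^ n * (2 * (n : ℤ) + 1) ^ (n - 1) +
      ∑ j ∈ Finset.Icc 1 n,
        (n.choose j : ℤ) * x * (x - 2 * (j : ℤ)) ^ (j - 1) * (-1) ^ (n - j) *
          (2 * ((n - j : ℕ) : ℤ) + 1) ^ (n - j - 1)
    = (x - 1) * (x - (2 * (n : ℤ) + 1)) ^ (n - 1) := by
  have h := congrArg (eval x) (abelPoly_comp_X_add_C (2 : ℤ) (-1) n)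
  rw [eval_comp, eval_finsetSum, sum_range_eq_add_Ico _ (by omega),
    Finset.Ico_add_one_right_eq_Icc] at h
  simp only [eval_mul, eval_C, eval_neg_one_abelPoly_two, eval_add, eval_X,
    eval_abelPoly _ (by omega : n ≠ 0), abelPoly_zero, eval_one] at h
  convert h.symm using 1
  · congr 1
    · simp
    · refine sum_congr rfl fun j hj => ?_
      rw [eval_abelPoly _ (by grind)]
      ring
  · ring
end

section
/- For every integer k ≥ 1, the polynomial identity x · Σ_{j=1}^{k} C(k-1, j-1) · (-1)^(j-1) · (j-1)! · ⟨k-j-1⟩ = ⟨k-1⟩ holds in ℚ[x], where ⟨n⟩ := ∏_{a=1}^{n}(x-a) for n ≥ 0 and ⟨-1⟩ := 1/x (so the j = k term is x · (-1)^(k-1) (k-1)! · (1/x)). -/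
/-!
Writing `(y)ₘ = y (y - 1) ⋯ (y - m + 1)` for the falling factorial, `⟨m⟩ = (x - 1)ₘ`,
`x ⟨m - 1⟩ = (x)ₘ` (also for `m = 0` under the convention `⟨-1⟩ = 1/x`) and
`(-1)ⱼ = (-1)ʲ j!`. With `n = k - 1` the identity becomes the Chu–Vandermonde identity
`(x - 1)ₙ = ∑ⱼ C(n, j) (-1)ⱼ (x)ₙ₋ⱼ`.
-/

/-- `⟨m⟩ := ∏_{a=1}^{m} (x - a)`, as a rational function in `x` over `ℚ`. -/
noncomputable def brkt (m : ℕ) : RatFunc ℚ :=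
  ∏ a ∈ Finset.Icc 1 m, (RatFunc.X - (a : RatFunc ℚ))

open Finset Polynomial

@[to_additive sum_Icc_one_eq_sum_range]
theorem Finset.prod_Icc_one_eq_prod_range {M : Type*} [CommMonoid M] (f : ℕ → M) (n : ℕ) :
    ∏ a ∈ Icc 1 n, f a = ∏ j ∈ range n, f (j + 1) := by
  rw [← Ico_add_one_right_eq_Icc, prod_Ico_eq_prod_range, Nat.add_sub_cancel]
  simp only [add_comm 1]

theorem descPochhammer_eval_add {R : Type*} [CommRing R] (r s : R) (n : ℕ) :
    (descPochhammer R n).eval (r + s) = ∑ ij ∈ antidiagonal n,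
      n.choose ij.1 * ((descPochhammer R ij.1).eval r * (descPochhammer R ij.2).eval s) := by
  simpa only [← descPochhammer_map (algebraMap ℤ R), eval_map_algebraMap, aeval_eq_smeval]
    using Ring.descPochhammer_smeval_add n (Commute.all r s)

theorem descPochhammer_eval_neg_one {R : Type*} [CommRing R] (n : ℕ) :
    (descPochhammer R n).eval (-1) = (-1) ^ n * n.factorial := by
  calc (descPochhammer R n).eval (-1) = ∏ j ∈ range n, ((-1) * ((j + 1 : ℕ) : R)) := by
        rw [descPochhammer_eval_eq_prod_range]
        exact prod_congr rfl fun j _ => by push_cast; ring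
    _ = (-1) ^ n * n.factorial := by
        rw [prod_mul_distrib, prod_const, card_range, ← Nat.cast_prod,
          prod_range_add_one_eq_factorial]

theorem brkt_eq_descPochhammer_eval (m : ℕ) :
    brkt m = (descPochhammer (RatFunc ℚ) m).eval (RatFunc.X - 1) := by
  rw [brkt, descPochhammer_eval_eq_prod_range, prod_Icc_one_eq_prod_range]
  exact prod_congr rfl fun j _ => by push_cast; ring

theorem X_mul_brkt (m : ℕ) :
    RatFunc.X * brkt m = (descPochhammer (RatFunc ℚ) (m + 1)).eval RatFunc.X := by
  rw [descPochhammer_succ_left, eval_mul, eval_comp, brkt_eq_descPochhammer_eval]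
  simp

theorem X_mul_ite_inv_brkt {n j : ℕ} (h : j ≤ n) :
    RatFunc.X * (if j = n then (RatFunc.X : RatFunc ℚ)⁻¹ else brkt (n - j - 1)) =
      (descPochhammer (RatFunc ℚ) (n - j)).eval RatFunc.X := by
  split_ifs with hjn
  · simp [hjn, RatFunc.X_ne_zero]
  · rw [X_mul_brkt]
    congr
    omega

/-- Lemma "facteur": for `k ≥ 1`, in `ℚ(x)`,
`x · Σ_{j=1}^{k} C(k-1,j-1)·(-1)^(j-1)·(j-1)!·⟨k-j-1⟩ = ⟨k-1⟩`,
where `⟨-1⟩ := 1/x` (which occurs exactly in the `j = k` term). -/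
theorem stmt13 (k : ℕ) (hk : 1 ≤ k) :
    (RatFunc.X : RatFunc ℚ) *
      ∑ j ∈ Finset.Icc 1 k,
        ((k - 1).choose (j - 1) : RatFunc ℚ) * (-1) ^ (j - 1) *
          ((j - 1).factorial : RatFunc ℚ) *
          (if j = k then (RatFunc.X : RatFunc ℚ)⁻¹ else brkt (k - j - 1))
    = brkt (k - 1) := by
  obtain ⟨n, rfl⟩ := Nat.exists_eq_add_of_le' hk
  calc _ = ∑ j ∈ range (n + 1), n.choose j * ((descPochhammer (RatFunc ℚ) j).eval (-1) *
          (descPochhammer (RatFunc ℚ) (n - j)).eval RatFunc.X) := by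
        rw [mul_sum, sum_Icc_one_eq_sum_range]
        refine sum_congr rfl fun j hj => ?_
        simp only [Nat.add_sub_cancel, Nat.add_right_cancel_iff, Nat.add_sub_add_right]
        rw [descPochhammer_eval_neg_one, ← X_mul_ite_inv_brkt (mem_range_succ_iff.mp hj)]
        ring
    _ = (descPochhammer (RatFunc ℚ) n).eval (-1 + RatFunc.X) := by
        rw [descPochhammer_eval_add, Nat.sum_antidiagonal_eq_sum_range_succ_mk]
    _ = brkt (n + 1 - 1) := by
        rw [Nat.add_sub_cancel, brkt_eq_descPochhammer_eval, neg_add_eq_sub]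
end

section
/- For integers 1 ≤ i ≤ n, one has Σ_{j=i}^{n} C(n-i, j-i) · j!·(2n-j-1)!/n! = 2 · i!·(2n-1)!/(n+i)!. -/
lemma key14 (m : ℕ) : ∀ a b : ℕ,
    (∑ k ∈ Finset.range (m+1),
      ((m.choose k : ℚ) * ((k+a).factorial : ℚ) * ((m-k+b).factorial : ℚ)))
      * ((a+b+1).factorial : ℚ)
    = (a.factorial : ℚ) * (b.factorial : ℚ) * ((m+a+b+1).factorial : ℚ) := by
  induction m with
  | zero =>
    intro a b
    simp [Nat.add_comm]
  | succ m ih =>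
    intro a b
    have hsplit :
        (∑ k ∈ Finset.range (m+2),
          ((m+1).choose k : ℚ) * ((k+a).factorial : ℚ) * ((m+1-k+b).factorial : ℚ))
        = (∑ k ∈ Finset.range (m+1),
            ((m.choose k : ℚ) * ((k+(a+1)).factorial : ℚ) * ((m-k+b).factorial : ℚ)))
          + (∑ k ∈ Finset.range (m+1),
            ((m.choose k : ℚ) * ((k+a).factorial : ℚ) * ((m-k+(b+1)).factorial : ℚ))) := by
      rw [Finset.sum_range_succ' (fun k =>
        (((m+1).choose k : ℚ) * ((k+a).factorial : ℚ) * ((m+1-k+b).factorial : ℚ)))]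
      have h1 : ∀ k ∈ Finset.range (m+1),
          (((m+1).choose (k+1) : ℚ) * (((k+1)+a).factorial : ℚ) * ((m+1-(k+1)+b).factorial : ℚ))
          = ((m.choose k : ℚ) * ((k+(a+1)).factorial : ℚ) * ((m-k+b).factorial : ℚ))
            + ((m.choose (k+1) : ℚ) * (((k+1)+a).factorial : ℚ) * ((m-k+b).factorial : ℚ)) := by
        intro k hk
        have hc : (m+1).choose (k+1) = m.choose k + m.choose (k+1) :=
          Nat.choose_succ_succ' m k
        have e1 : k + (a+1) = (k+1) + a := by omega
        have e2 : m + 1 - (k+1) + b = m - k + b := by omega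
        rw [hc, e1, e2]
        push_cast
        ring
      rw [Finset.sum_congr rfl h1, Finset.sum_add_distrib]
      have h2 : (∑ k ∈ Finset.range (m+1),
            ((m.choose k : ℚ) * ((k+a).factorial : ℚ) * ((m-k+(b+1)).factorial : ℚ)))
          = (∑ k ∈ Finset.range (m+1),
            ((m.choose (k+1) : ℚ) * (((k+1)+a).factorial : ℚ) * ((m-k+b).factorial : ℚ)))
            + (((m+1).choose 0 : ℚ) * ((0+a).factorial : ℚ) * ((m+1-0+b).factorial : ℚ)) := by
        rw [Finset.sum_range_succ' (fun k =>
          ((m.choose k : ℚ) * ((k+a).factorial : ℚ) * ((m-k+(b+1)).factorial : ℚ)))]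
        rw [Finset.sum_range_succ (fun k =>
          ((m.choose (k+1) : ℚ) * (((k+1)+a).factorial : ℚ) * ((m-k+b).factorial : ℚ)))]
        have hz : m.choose (m+1) = 0 := Nat.choose_eq_zero_of_lt (by omega)
        rw [hz]
        have h4 : ∀ k ∈ Finset.range m,
            ((m.choose (k+1) : ℚ) * (((k+1)+a).factorial : ℚ) * ((m-(k+1)+(b+1)).factorial : ℚ))
            = ((m.choose (k+1) : ℚ) * (((k+1)+a).factorial : ℚ) * ((m-k+b).factorial : ℚ)) := by
          intro k hk
          simp only [Finset.mem_range] at hk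
          have : m-(k+1)+(b+1) = m-k+b := by omega
          rw [this]
        rw [Finset.sum_congr rfl h4]
        have e0 : m - 0 + (b+1) = m + 1 - 0 + b := by omega
        rw [e0]
        simp
      rw [h2]
      ring
    rw [hsplit, add_mul]
    have ih1 := ih (a+1) b
    have ih2 := ih a (b+1)
    rw [show (a+1)+b+1 = a+b+2 by omega, show m+(a+1)+b+1 = m+a+b+2 by omega] at ih1
    rw [show a+(b+1)+1 = a+b+2 by omega, show m+a+(b+1)+1 = m+a+b+2 by omega] at ih2
    rw [show (m+1)+a+b+1 = (m+a+b+1)+1 by omega]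
    have hf : ((a+b+2).factorial : ℚ) = ((a+b+2 : ℕ) : ℚ) * ((a+b+1).factorial : ℚ) := by
      rw [show a+b+2 = (a+b+1)+1 by omega, Nat.factorial_succ]; push_cast; ring
    rw [hf] at ih1 ih2
    have hA : ((a+1).factorial : ℚ) = ((a+1:ℕ):ℚ) * (a.factorial : ℚ) := by
      rw [Nat.factorial_succ]; push_cast; ring
    have hB : ((b+1).factorial : ℚ) = ((b+1:ℕ):ℚ) * (b.factorial : ℚ) := by
      rw [Nat.factorial_succ]; push_cast; ring
    have hM : (((m+a+b+1)+1).factorial : ℚ)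
        = ((m+a+b+2:ℕ):ℚ) * ((m+a+b+1).factorial : ℚ) := by
      rw [Nat.factorial_succ]; push_cast; ring
    rw [hA] at ih1
    rw [hB] at ih2
    rw [show ((m+a+b+2).factorial : ℚ) = ((m+a+b+2:ℕ):ℚ) * ((m+a+b+1).factorial : ℚ) from by
      rw [show m+a+b+2 = (m+a+b+1)+1 by omega, Nat.factorial_succ]; push_cast; ring] at ih1 ih2
    rw [hM]
    have hne : ((a+b+2 : ℕ) : ℚ) ≠ 0 := by positivity
    simp only [← add_assoc] at ih1 ih2 ⊢
    apply mul_left_cancel₀ hne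
    push_cast at ih1 ih2 ⊢
    linear_combination ih1 + ih2

/-- Lemma "Mdominant": for `1 ≤ i ≤ n`,
`Σ_{j=i}^{n} C(n-i, j-i)·j!·(2n-j-1)!/n! = 2·i!·(2n-1)!/(n+i)!`. -/
theorem stmt14 (i n : ℕ) (hi : 1 ≤ i) (hin : i ≤ n) :
    ∑ j ∈ Finset.Icc i n,
      ((n - i).choose (j - i) : ℚ) * (j.factorial : ℚ) * ((2 * n - j - 1).factorial : ℚ) /
        (n.factorial : ℚ)
    = 2 * (i.factorial : ℚ) * ((2 * n - 1).factorial : ℚ) / ((n + i).factorial : ℚ) := by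
  have hn : 1 ≤ n := le_trans hi hin
  set m := n - i with hm
  have hrange : n + 1 - i = m + 1 := by omega
  rw [← Finset.Ico_add_one_right_eq_Icc, Finset.sum_Ico_eq_sum_range, hrange]
  have hterm : ∀ k ∈ Finset.range (m+1),
      ((n - i).choose ((i+k) - i) : ℚ) * ((i+k).factorial : ℚ)
        * ((2 * n - (i+k) - 1).factorial : ℚ) / (n.factorial : ℚ)
      = ((m.choose k : ℚ) * ((k+i).factorial : ℚ) * ((m-k+(n-1)).factorial : ℚ))
          / (n.factorial : ℚ) := by
    intro k hk
    simp only [Finset.mem_range] at hk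
    have e1 : (i+k) - i = k := by omega
    have e2 : i + k = k + i := by omega
    have e3 : 2 * n - (i+k) - 1 = m - k + (n-1) := by omega
    rw [e1, e3, e2, ← hm]
  rw [Finset.sum_congr rfl hterm, ← Finset.sum_div]
  have hkey := key14 m i (n-1)
  have e4 : i + (n-1) + 1 = n + i := by omega
  have e5 : m + i + (n-1) + 1 = 2 * n := by omega
  rw [e4, e5] at hkey
  have h2n : ((2*n).factorial : ℚ) = ((2*n : ℕ) : ℚ) * ((2*n-1).factorial : ℚ) := by
    have h := Nat.factorial_succ (2*n-1)
    rw [show 2*n-1+1 = 2*n by omega] at h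
    rw [h]; push_cast [show 2*n-1+1 = 2*n by omega]; ring
  have hnf : (n.factorial : ℚ) = ((n:ℕ):ℚ) * ((n-1).factorial : ℚ) := by
    have h := Nat.factorial_succ (n-1)
    rw [show n-1+1 = n by omega] at h
    rw [h]; push_cast [show n-1+1 = n by omega]; ring
  rw [h2n] at hkey
  have hne1 : (n.factorial : ℚ) ≠ 0 := by positivity
  have hne2 : (((n+i).factorial : ℚ)) ≠ 0 := by positivity
  rw [div_eq_div_iff hne1 hne2]
  push_cast at hkey ⊢
  rw [hnf]
  linear_combination hkey
end

section
/- For every integer n ≥ 1, Σ_{j=0}^{n} C(n,j) · (-1)^j · (x-2j) · ⟨j-1⟩ / ⟨n+j⟩ = 0 as an identity of rational functions in x, where ⟨m⟩ := ∏_{a=1}^{m}(x-a) and ⟨-1⟩ := 1/x, so that the j = 0 term is x·(1/x)/⟨n⟩ = 1/⟨n⟩. -/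
lemma X_sub_ne (a : ℕ) : (RatFunc.X : RatFunc ℚ) - (a : RatFunc ℚ) ≠ 0 := by
  have h : (RatFunc.X : RatFunc ℚ) - (a : RatFunc ℚ)
      = algebraMap (Polynomial ℚ) (RatFunc ℚ) (Polynomial.X - Polynomial.C (a : ℚ)) := by
    simp [RatFunc.algebraMap_X]
  rw [h]
  exact RatFunc.algebraMap_ne_zero (Polynomial.X_sub_C_ne_zero _)

lemma brkt_ne_zero (m : ℕ) : brkt m ≠ 0 :=
  Finset.prod_ne_zero_iff.mpr fun a _ => X_sub_ne a

lemma brkt_succ (m : ℕ) : brkt (m + 1) = brkt m * (RatFunc.X - ((m+1 : ℕ) : RatFunc ℚ)) := by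
  unfold brkt
  rw [Finset.prod_Icc_succ_top (Nat.le_add_left 1 m)]

lemma X_ne_zero : (RatFunc.X : RatFunc ℚ) ≠ 0 := by simpa using X_sub_ne 0

lemma key (n : ℕ) (hn : 1 ≤ n) : ∀ m, m ≤ n →
    ∑ j ∈ Finset.range (m + 1),
      (n.choose j : RatFunc ℚ) * (-1) ^ j * (RatFunc.X - 2 * (j : RatFunc ℚ)) *
        (if j = 0 then (RatFunc.X : RatFunc ℚ)⁻¹ else brkt (j - 1)) / brkt (n + j)
    = (-1) ^ m * ((n-1).choose m : RatFunc ℚ) * brkt m / brkt (n + m) := by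
  intro m
  induction m with
  | zero =>
    intro _
    rw [Finset.sum_range_one]
    have h0 : brkt 0 = 1 := by simp [brkt]
    rw [h0]
    simp [mul_inv_cancel₀ X_ne_zero]
  | succ m ih =>
    intro hm
    have hmn : m ≤ n := le_of_lt hm
    rw [Finset.sum_range_succ, ih hmn]
    have hne : ¬ (m + 1 = 0) := Nat.succ_ne_zero m
    simp only [hne, if_false, Nat.add_sub_cancel]
    set a : RatFunc ℚ := ((n-1).choose m : RatFunc ℚ) with ha
    set b : RatFunc ℚ := ((n-1).choose (m+1) : RatFunc ℚ) with hbdef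
    set c : RatFunc ℚ := (n.choose (m+1) : RatFunc ℚ) with hcdef
    have hc : c = a + b := by
      rw [ha, hbdef, hcdef]
      have : n.choose (m+1) = (n-1).choose m + (n-1).choose (m+1) := by
        conv_lhs => rw [← Nat.succ_pred_eq_of_pos hn]
        exact Nat.choose_succ_succ' (n-1) m
      rw [this]; push_cast; ring
    have hb : ((m:RatFunc ℚ)+1) * b = ((n:RatFunc ℚ) - 1 - m) * a := by
      have h1 := Nat.choose_succ_right_eq (n-1) m
      have h2 : ((n - 1 - m : ℕ) : RatFunc ℚ) = (n : RatFunc ℚ) - 1 - m := by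
        have : m ≤ n - 1 := Nat.le_sub_one_of_lt hm
        push_cast [Nat.cast_sub this, Nat.cast_sub hn]
        ring
      rw [ha, hbdef]
      have := congrArg (fun k : ℕ => (k : RatFunc ℚ)) h1
      push_cast at this
      rw [mul_comm]
      rw [this, h2]; ring
    have P : a * (RatFunc.X - ((n:RatFunc ℚ) + (m:RatFunc ℚ) + 1)) - c * (RatFunc.X - 2*((m:RatFunc ℚ)+1))
        + b * (RatFunc.X - ((m:RatFunc ℚ)+1)) = 0 := by
      linear_combination (2*((m:RatFunc ℚ)+1) - RatFunc.X) * hc + hb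
    have e1 : brkt (n + (m+1)) = brkt (n+m) * (RatFunc.X - ((n+m+1 : ℕ) : RatFunc ℚ)) :=
      brkt_succ (n+m)
    have e2 : brkt (m+1) = brkt m * (RatFunc.X - ((m+1 : ℕ) : RatFunc ℚ)) := brkt_succ m
    rw [e1, e2]
    have hK := brkt_ne_zero m
    have hD := brkt_ne_zero (n+m)
    have hs := X_sub_ne (n+m+1)
    push_cast at *
    field_simp
    linear_combination ((-1:RatFunc ℚ)^m) * P

/-- For `n ≥ 1`, in `ℚ(x)`,
`Σ_{j=0}^{n} C(n,j)·(-1)^j·(x-2j)·⟨j-1⟩/⟨n+j⟩ = 0`,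
where `⟨-1⟩ := 1/x` (which occurs exactly in the `j = 0` term). -/
theorem stmt15 (n : ℕ) (hn : 1 ≤ n) :
    ∑ j ∈ Finset.range (n + 1),
      (n.choose j : RatFunc ℚ) * (-1) ^ j * (RatFunc.X - 2 * (j : RatFunc ℚ)) *
        (if j = 0 then (RatFunc.X : RatFunc ℚ)⁻¹ else brkt (j - 1)) / brkt (n + j)
    = 0 := by
  rw [key n hn n le_rfl, Nat.choose_eq_zero_of_lt (Nat.sub_lt hn one_pos)]
  simp
end

section
/- For all real (or formal) x, y and |θ| < 1, the Gauss hypergeometric function ψ_x(θ) = ₂F₁(x/2, (1+x)/2; 1+x; θ) equals (2/(1+√(1−θ)))^x, and consequently ψ_x(θ)·ψ_y(θ) = ψ_{x+y}(θ); extracting Taylor coefficients in θ yields: for all m ≥ 0 and j,k ≥ 1, Σ_{s=0}^{m} C(m,s)·(j·(2s+j−1)!/(s+j)!)·(k·(2(m−s)+k−1)!/((m−s)+k)!) = (j+k)·(2m+j+k−1)!/(m+j+k)!. -/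
/-!
The ballot numbers `j (2n+j-1)! / (n! (n+j)!)` are the Taylor coefficients of the `j`-th power of
the Catalan series `C = 1 + X C²` (so `C^j = ψ_j(4X)`). Indeed, `C = 1 + X C²`
gives `C^(j+1) = C^j + X C^(j+2)`, a recursion the ballot numbers also satisfy. Comparing the
coefficients of `X^m` in `C^j · C^k = C^(j+k)` and multiplying by `m!` gives the identity.
-/

open PowerSeries Finset
open scoped Nat

/-- Equals `j/(2n+j) · C(2n+j, n)`. -/
noncomputable def ballot (j n : ℕ) : ℚ :=
  j * (2 * n + j - 1)! / (n ! * (n + j)!)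

@[simp]
lemma ballot_zero_left (n : ℕ) : ballot 0 n = 0 := by
  simp [ballot]

lemma ballot_zero_right {j : ℕ} (hj : j ≠ 0) : ballot j 0 = 1 := by
  obtain ⟨i, rfl⟩ := Nat.exists_eq_add_one_of_ne_zero hj
  simp only [ballot, mul_zero, zero_add, Nat.add_sub_cancel, Nat.factorial_zero, Nat.cast_one,
    one_mul, Nat.factorial_succ, Nat.cast_mul]
  have : (i ! : ℚ) ≠ 0 := by positivity
  field_simp

lemma ballot_succ_succ (j n : ℕ) :
    ballot (j + 1) (n + 1) = ballot j (n + 1) + ballot (j + 2) n := by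
  simp only [ballot]
  rw [show 2 * (n + 1) + (j + 1) - 1 = (2 * n + j + 1) + 1 by omega,
    show 2 * (n + 1) + j - 1 = 2 * n + j + 1 by omega,
    show 2 * n + (j + 2) - 1 = 2 * n + j + 1 by omega,
    show n + 1 + (j + 1) = (n + j + 1) + 1 by omega,
    show n + 1 + j = n + j + 1 by omega,
    show n + (j + 2) = (n + j + 1) + 1 by omega,
    Nat.factorial_succ (2 * n + j + 1), Nat.factorial_succ (n + j + 1), Nat.factorial_succ n]
  push_cast
  field_simp
  ring

lemma factorial_mul_ballot (j n : ℕ) :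
    (n ! : ℚ) * ballot j n = j * (2 * n + j - 1)! / (n + j)! := by
  have : (n ! : ℚ) ≠ 0 := by positivity
  rw [ballot]
  field_simp

lemma catalanSeries_pow_succ (j : ℕ) :
    catalanSeries ^ (j + 1) = catalanSeries ^ j + X * catalanSeries ^ (j + 2) := by
  calc catalanSeries ^ (j + 1) = catalanSeries ^ j * (catalanSeries ^ 2 * X + 1) := by
        rw [catalanSeries_sq_mul_X_add_one, pow_succ]
    _ = catalanSeries ^ j + X * catalanSeries ^ (j + 2) := by ring

theorem coeff_catalanSeries_pow {j : ℕ} (hj : j ≠ 0) (n : ℕ) :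
    ((coeff n (catalanSeries ^ j) : ℕ) : ℚ) = ballot j n := by
  induction n generalizing j with
  | zero => simp [ballot_zero_right hj]
  | succ n ih =>
    -- In positive degree the formula also holds for `j = 0`, so the induction on `j` starts there.
    clear hj
    induction j with
    | zero => simp [coeff_one]
    | succ j ihj =>
      rw [catalanSeries_pow_succ, map_add, coeff_succ_X_mul, Nat.cast_add, ihj,
        ih (by omega), ballot_succ_succ]

theorem sum_ballot_mul_ballot {j k : ℕ} (hj : j ≠ 0) (hk : k ≠ 0) (m : ℕ) :
    ∑ s ∈ range (m + 1), ballot j s * ballot k (m - s) = ballot (j + k) m := by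
  rw [← coeff_catalanSeries_pow (by omega), pow_add, coeff_mul,
    Nat.sum_antidiagonal_eq_sum_range_succ_mk]
  push_cast
  simp only [coeff_catalanSeries_pow hj, coeff_catalanSeries_pow hk]

/-- The finitary consequence of the multiplicativity `ψ_x(θ)·ψ_y(θ) = ψ_{x+y}(θ)` of the
Gauss hypergeometric function `ψ_x(θ) = ₂F₁(x/2,(1+x)/2;1+x;θ) = (2/(1+√(1-θ)))^x`:
for all `m ≥ 0` and `j, k ≥ 1`,
`Σ_{s=0}^{m} C(m,s)·(j·(2s+j-1)!/(s+j)!)·(k·(2(m-s)+k-1)!/((m-s)+k)!)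
  = (j+k)·(2m+j+k-1)!/(m+j+k)!`. -/
theorem stmt18 (m j k : ℕ) (hj : 1 ≤ j) (hk : 1 ≤ k) :
    ∑ s ∈ Finset.range (m + 1),
      (m.choose s : ℚ) * ((j : ℚ) * ((2 * s + j - 1).factorial : ℚ) / ((s + j).factorial : ℚ)) *
        ((k : ℚ) * ((2 * (m - s) + k - 1).factorial : ℚ) / (((m - s) + k).factorial : ℚ))
    = ((j : ℚ) + (k : ℚ)) * ((2 * m + j + k - 1).factorial : ℚ) / ((m + j + k).factorial : ℚ) := by
  have hterm : ∀ s ∈ range (m + 1),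
      (m.choose s : ℚ) * (j * (2 * s + j - 1)! / (s + j)!) *
        (k * (2 * (m - s) + k - 1)! / ((m - s) + k)!)
      = m ! * (ballot j s * ballot k (m - s)) := by
    intro s hs
    rw [← factorial_mul_ballot, ← factorial_mul_ballot,
      ← Nat.choose_mul_factorial_mul_factorial (mem_range_succ_iff.mp hs)]
    push_cast
    ring
  rw [sum_congr rfl hterm, ← mul_sum, sum_ballot_mul_ballot (by omega) (by omega),
    factorial_mul_ballot, add_assoc, add_assoc]
  push_cast
  ring
end

section
/- The Möbius number of the extended pointed partition poset Π̂^A_n (the poset Π^A_n of pointed partitions of [n] with a global maximum 1̂ adjoined) satisfies μ(0̂, 1̂) = (-1)^n·(n-1)^(n-1); equivalently, the value at x = 1 of the characteristic polynomial (x-n)^(n-1) of Π^A_n is (1-n)^(n-1), and μ(0̂,1̂) of Π̂^A_n is its negative. -/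
open scoped Classical
open Finset

/-- A pointed partition of `[n]` encoded as an idempotent map `f : Fin n → Fin n`:
the blocks are the fibres of `f` and the pointed element of the block of `x` is `f x`. -/
abbrev PtdPart (n : ℕ) := {f : Fin n → Fin n // ∀ x, f (f x) = f x}

/-- The order on pointed partitions: `a ≤ b` iff the partition of `a` refines that of `b`
and every pointed element of `b` is pointed in `a`. -/
def PtdPart.le {n : ℕ} (a b : PtdPart n) : Prop :=
  (∀ x, b.1 (a.1 x) = b.1 x) ∧ (∀ x, b.1 x = x → a.1 x = x)

/-- The minimal element: all blocks are pointed singletons. -/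
def PtdPart.bot (n : ℕ) : PtdPart n := ⟨fun x => x, fun _ => rfl⟩

/-! ### The Abel-type identity `∑ j C(k,j) j^(k-j) (1-j)^(j-1) = 1` -/

/-- The weight `(1-j)^(j-1)`: value at `1` of the characteristic polynomial of `Π^A_j`. -/
def ccZ (j : ℕ) : ℤ := (1 - (j : ℤ)) ^ (j - 1)

/-- Alternating binomial sums annihilate monomials of low degree. -/
lemma elem_alt (m : ℕ) : ∀ n : ℕ, m < n →
    ∑ k ∈ range (n + 1), (-1 : ℤ) ^ k * (n.choose k : ℤ) * (k : ℤ) ^ m = 0 := by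
  induction m using Nat.strong_induction_on with
  | _ m IH =>
    intro n hn
    match m with
    | 0 =>
      have h := Int.alternating_sum_range_choose_of_ne (n := n) (by omega)
      simpa using h
    | m + 1 =>
      obtain ⟨n', rfl⟩ : ∃ n', n = n' + 1 := ⟨n - 1, by omega⟩
      have key : ∑ i ∈ range (n' + 1), (-1 : ℤ) ^ i * (n'.choose i : ℤ) * ((i : ℤ) + 1) ^ m
          = 0 := by
        have expand : ∀ i ∈ range (n' + 1),
            (-1 : ℤ) ^ i * (n'.choose i : ℤ) * ((i : ℤ) + 1) ^ m
              = ∑ j ∈ range (m + 1),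
                  ((-1 : ℤ) ^ i * (n'.choose i : ℤ) * (i : ℤ) ^ j) * (m.choose j : ℤ) := by
          intro i _
          rw [add_pow, Finset.mul_sum]
          exact Finset.sum_congr rfl fun j _ => by ring
        rw [Finset.sum_congr rfl expand, Finset.sum_comm]
        apply Finset.sum_eq_zero
        intro j hj
        have hjm : j < m + 1 := Finset.mem_range.1 hj
        rw [← Finset.sum_mul, IH j hjm n' (by omega), zero_mul]
      rw [Finset.sum_range_succ']
      have hstep : ∀ i ∈ range (n' + 1),
          (-1 : ℤ) ^ (i + 1) * (((n' + 1).choose (i + 1) : ℕ) : ℤ) * (((i + 1 : ℕ)) : ℤ) ^ (m + 1)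
            = (-((n' : ℤ) + 1)) * ((-1 : ℤ) ^ i * (n'.choose i : ℤ) * ((i : ℤ) + 1) ^ m) := by
        intro i _
        have hc : (((n' + 1).choose (i + 1) : ℕ) : ℤ) * ((i : ℤ) + 1)
            = ((n' : ℤ) + 1) * (n'.choose i : ℤ) := by
          have h3 : ((n' + 1) * n'.choose i : ℕ) = ((n' + 1).choose (i + 1) * (i + 1) : ℕ) :=
            Nat.add_one_mul_choose_eq n' i
          have h4 : ((n' : ℤ) + 1) * (n'.choose i : ℤ)
              = (((n' + 1).choose (i + 1) : ℕ) : ℤ) * ((i : ℤ) + 1) := by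
            exact_mod_cast h3
          linear_combination -h4
        have hcast : (((i + 1 : ℕ)) : ℤ) = (i : ℤ) + 1 := by push_cast; ring
        rw [hcast, pow_succ]
        linear_combination (-(-1 : ℤ) ^ i * ((i : ℤ) + 1) ^ m) * hc
      rw [Finset.sum_congr rfl hstep, ← Finset.mul_sum, key, mul_zero]
      simp

/-- Finite-difference lemma: alternating binomial sums kill `(x-k)^(N-1)`. -/
lemma findiff (N : ℕ) (hN : 1 ≤ N) (x : ℤ) :
    ∑ k ∈ range (N + 1), (-1 : ℤ) ^ k * (N.choose k : ℤ) * (x - (k : ℤ)) ^ (N - 1) = 0 := by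
  have expand : ∀ k ∈ range (N + 1),
      (-1 : ℤ) ^ k * (N.choose k : ℤ) * (x - (k : ℤ)) ^ (N - 1)
        = ∑ m ∈ range (N - 1 + 1),
            ((-1 : ℤ) ^ k * (N.choose k : ℤ) * (k : ℤ) ^ (N - 1 - m)) *
              ((-1 : ℤ) ^ (m + (N - 1)) * x ^ m * ((N - 1).choose m : ℤ)) := by
    intro k _
    rw [sub_pow, Finset.mul_sum]
    exact Finset.sum_congr rfl fun m _ => by ring
  rw [Finset.sum_congr rfl expand, Finset.sum_comm]
  apply Finset.sum_eq_zero
  intro m hm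
  rw [← Finset.sum_mul, elem_alt (N - 1 - m) N (by omega), zero_mul]

open Polynomial in
/-- The Abel polynomial sum. -/
noncomputable def abelP (n : ℕ) (x : ℤ) : Polynomial ℤ :=
  ∑ k ∈ Icc 1 n, C ((n.choose k : ℤ) * x * (x - (k : ℤ)) ^ (k - 1)) * (X + C (k : ℤ)) ^ (n - k)

open Polynomial in
/-- Abel's binomial theorem (polynomial form). -/
lemma abelP_eq (n : ℕ) (hn : 1 ≤ n) : ∀ x : ℤ,
    abelP n x = (X + C x) ^ n - X ^ n := by
  induction n, hn using Nat.le_induction with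
  | base =>
    intro x
    simp [abelP]
  | succ n hn IH =>
    intro x
    -- the derivative of `abelP (n+1) x` is `(n+1) • abelP n x`
    have hder : (abelP (n + 1) x).derivative = C ((n : ℤ) + 1) * abelP n x := by
      unfold abelP
      rw [derivative_sum]
      have hIcc : Icc 1 (n + 1) = insert (n + 1) (Icc 1 n) := by
        ext a; simp; omega
      rw [hIcc, Finset.sum_insert (by simp), Finset.mul_sum]
      have hterm : ∀ k ∈ Icc 1 n,
          (C (((n+1).choose k : ℤ) * x * (x - (k : ℤ)) ^ (k - 1)) * (X + C (k : ℤ)) ^ (n + 1 - k)).derivative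
            = C ((n : ℤ) + 1) * (C ((n.choose k : ℤ) * x * (x - (k : ℤ)) ^ (k - 1)) * (X + C (k : ℤ)) ^ (n - k)) := by
        intro k hk
        simp only [mem_Icc] at hk
        obtain ⟨hk1, hk2⟩ := hk
        rw [derivative_C_mul, derivative_pow, derivative_add, derivative_X, derivative_C, add_zero,
          mul_one]
        have h1 : n + 1 - k - 1 = n - k := by omega
        have hm : ((n + 1 - k : ℕ) : ℤ) = (n : ℤ) + 1 - (k : ℤ) := by omega
        rw [h1, hm]
        have hco : (((n+1).choose k : ℕ) : ℤ) * x * (x - (k:ℤ)) ^ (k - 1) * ((n:ℤ) + 1 - (k:ℤ))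
            = ((n:ℤ) + 1) * (((n.choose k : ℕ) : ℤ) * x * (x - (k:ℤ)) ^ (k - 1)) := by
          have h4 : ((n.choose k * (n+1) : ℕ) : ℤ) = (((n+1).choose k * (n + 1 - k) : ℕ) : ℤ) := by
            exact_mod_cast congrArg (Nat.cast : ℕ → ℤ) (Nat.choose_mul_succ_eq n k)
          push_cast at h4
          rw [hm] at h4
          linear_combination (-(x * (x - (k:ℤ)) ^ (k - 1))) * h4
        rw [← mul_assoc, ← mul_assoc, ← C_mul, ← C_mul, hco]
      rw [Finset.sum_congr rfl hterm]
      have hlast : ∀ a c : ℤ, (C a * (X + C c) ^ (n + 1 - (n + 1))).derivative = 0 := by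
        intro a c
        simp
      rw [hlast, zero_add]
    -- hence `abelP (n+1) x - ((X + C x)^(n+1) - X^(n+1))` is a constant
    have hd0 : (abelP (n + 1) x - ((X + C x) ^ (n + 1) - X ^ (n + 1))).derivative = 0 := by
      rw [derivative_sub, derivative_sub, hder, derivative_pow, derivative_pow,
        derivative_add, derivative_X, derivative_C, add_zero, Nat.add_sub_cancel, IH x]
      push_cast
      ring
    have hC := eq_C_of_derivative_eq_zero hd0
    -- evaluate at `-x` to show the constant vanishes
    have heval : Polynomial.eval (-x) (abelP (n + 1) x - ((X + C x) ^ (n + 1) - X ^ (n + 1))) = 0 := by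
      rw [eval_sub, eval_sub, eval_pow, eval_pow, eval_add, eval_X, eval_C]
      have h1 : Polynomial.eval (-x) (abelP (n + 1) x)
          = ∑ k ∈ Icc 1 (n+1), ((n+1).choose k : ℤ) * x * (x - (k:ℤ)) ^ (k-1) * (-x + (k:ℤ)) ^ (n+1-k) := by
        unfold abelP
        rw [eval_finset_sum]
        exact Finset.sum_congr rfl fun k _ => by
          rw [eval_mul, eval_C, eval_pow, eval_add, eval_X, eval_C]
      rw [h1]
      have h2 : ∀ k ∈ Icc 1 (n+1),
          ((n+1).choose k : ℤ) * x * (x - (k:ℤ)) ^ (k-1) * (-x + (k:ℤ)) ^ (n+1-k)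
            = ((-1:ℤ)^(n+1) * x) * ((-1:ℤ)^k * ((n+1).choose k : ℤ) * (x - (k:ℤ)) ^ n) := by
        intro k hk
        simp only [mem_Icc] at hk
        have e1 : (-x + (k:ℤ)) ^ (n+1-k) = (-1:ℤ)^(n+1-k) * (x - (k:ℤ)) ^ (n+1-k) := by
          have : (-x + (k:ℤ)) = -(x - (k:ℤ)) := by ring
          rw [this, neg_pow]
        have e2 : (x - (k:ℤ)) ^ (k-1) * (x - (k:ℤ)) ^ (n+1-k) = (x - (k:ℤ)) ^ n := by
          rw [← pow_add]
          congr 1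
          omega
        have e3 : (-1:ℤ)^(n+1-k) = (-1:ℤ)^(n+1) * (-1:ℤ)^k := by
          have e4 : (-1:ℤ)^(n+1-k) * (-1:ℤ)^k = (-1:ℤ)^(n+1) := by
            rw [← pow_add]
            congr 1
            omega
          have e5 : ((-1:ℤ)^k) * ((-1:ℤ)^k) = 1 := by
            rw [← pow_add, ← two_mul, pow_mul]
            norm_num
          calc (-1:ℤ)^(n+1-k) = (-1:ℤ)^(n+1-k) * (((-1:ℤ)^k) * ((-1:ℤ)^k)) := by rw [e5, mul_one]
            _ = ((-1:ℤ)^(n+1-k) * (-1:ℤ)^k) * (-1:ℤ)^k := by ring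
            _ = (-1:ℤ)^(n+1) * (-1:ℤ)^k := by rw [e4]
        calc ((n+1).choose k : ℤ) * x * (x - (k:ℤ)) ^ (k-1) * (-x + (k:ℤ)) ^ (n+1-k)
            = ((n+1).choose k : ℤ) * x * (-1:ℤ)^(n+1-k) *
                ((x - (k:ℤ)) ^ (k-1) * (x - (k:ℤ)) ^ (n+1-k)) := by rw [e1]; ring
          _ = ((n+1).choose k : ℤ) * x * ((-1:ℤ)^(n+1) * (-1:ℤ)^k) * (x - (k:ℤ)) ^ n := by
              rw [e2, e3]
          _ = ((-1:ℤ)^(n+1) * x) * ((-1:ℤ)^k * ((n+1).choose k : ℤ) * (x - (k:ℤ)) ^ n) := by ring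
      rw [Finset.sum_congr rfl h2, ← Finset.mul_sum]
      have h3 : ∑ k ∈ Icc 1 (n+1), (-1:ℤ)^k * ((n+1).choose k : ℤ) * (x - (k:ℤ)) ^ n
          = - ((x : ℤ) ^ n) := by
        have h4 := findiff (n+1) (by omega) x
        have h5 : range (n + 1 + 1) = insert 0 (Icc 1 (n+1)) := by
          ext a; simp; omega
        rw [h5, Finset.sum_insert (by simp)] at h4
        simp only [pow_zero, one_mul, Nat.choose_zero_right, Nat.cast_one, Nat.cast_zero,
          sub_zero, Nat.add_sub_cancel] at h4
        linarith
      rw [h3]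
      have hxx : (-x + x) = (0 : ℤ) := by ring
      rw [hxx, zero_pow (by omega : n + 1 ≠ 0)]
      have : (-x : ℤ) ^ (n+1) = (-1:ℤ)^(n+1) * x ^ (n+1) := by rw [neg_pow]
      rw [this]
      ring
    rw [hC, eval_C] at heval
    have hzero : abelP (n + 1) x - ((X + C x) ^ (n + 1) - X ^ (n + 1)) = 0 := by
      rw [hC, heval, map_zero]
    exact sub_eq_zero.1 hzero

open Polynomial in
/-- The Abel-type identity needed: `∑_j C(k,j) j^(k-j) (1-j)^(j-1) = 1`. -/
lemma abel_sum (k : ℕ) (hk : 1 ≤ k) :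
    ∑ j ∈ range (k + 1), (k.choose j : ℤ) * (j : ℤ) ^ (k - j) * ccZ j = 1 := by
  have h := congrArg (Polynomial.eval 0) (abelP_eq k hk 1)
  rw [eval_sub, eval_pow, eval_pow, eval_add, eval_X, eval_C] at h
  unfold abelP at h
  rw [eval_finset_sum] at h
  have h2 : ∀ j ∈ Icc 1 k,
      Polynomial.eval 0 (C ((k.choose j : ℤ) * 1 * ((1:ℤ) - (j : ℤ)) ^ (j - 1)) * (X + C (j : ℤ)) ^ (k - j))
        = (k.choose j : ℤ) * (j : ℤ) ^ (k - j) * ccZ j := by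
    intro j hj
    rw [eval_mul, eval_C, eval_pow, eval_add, eval_X, eval_C, zero_add]
    unfold ccZ
    ring
  rw [Finset.sum_congr rfl h2] at h
  rw [zero_pow (by omega : k ≠ 0), sub_zero, zero_add, one_pow] at h
  have h5 : range (k + 1) = insert 0 (Icc 1 k) := by
    ext a; simp; omega
  rw [h5, Finset.sum_insert (by simp), h]
  simp [zero_pow (by omega : k ≠ 0)]

/-! ### The poset of pointed partitions -/

/-- The set of pointed (fixed) elements of a pointed partition. -/
def fixSet {n : ℕ} (b : PtdPart n) : Finset (Fin n) := univ.filter fun x => b.1 x = x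

lemma mem_fixSet {n : ℕ} {b : PtdPart n} {x : Fin n} : x ∈ fixSet b ↔ b.1 x = x := by
  simp [fixSet]

lemma apply_mem_fixSet {n : ℕ} (b : PtdPart n) (x : Fin n) : b.1 x ∈ fixSet b :=
  mem_fixSet.2 (b.2 x)

lemma fixSet_subset_of_le {n : ℕ} {a b : PtdPart n} (h : PtdPart.le a b) :
    fixSet b ⊆ fixSet a := fun x hx => mem_fixSet.2 (h.2 x (mem_fixSet.1 hx))

lemma le_bot_iff' {n : ℕ} (a : PtdPart n) :
    PtdPart.le a (PtdPart.bot n) ↔ a = PtdPart.bot n := by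
  constructor
  · intro h
    exact Subtype.ext (funext fun x => h.1 x)
  · rintro rfl
    exact ⟨fun x => rfl, fun x h => h⟩

/-- The extension map: given `g` on `fixSet b \ J`, produce an idempotent above `b`
with fixed set `J`. -/
def extFun {n : ℕ} (b : PtdPart n) (J : Finset (Fin n))
    (g : ↥(fixSet b \ J) → ↥J) : Fin n → Fin n := fun x =>
  if h : b.1 x ∈ J then b.1 x
  else ↑(g ⟨b.1 x, Finset.mem_sdiff.2 ⟨apply_mem_fixSet b x, h⟩⟩)

lemma extFun_mem {n : ℕ} (b : PtdPart n) (J : Finset (Fin n))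
    (g : ↥(fixSet b \ J) → ↥J) (x : Fin n) : extFun b J g x ∈ J := by
  unfold extFun
  split
  · assumption
  · exact (g _).2

lemma extFun_fix {n : ℕ} (b : PtdPart n) (J : Finset (Fin n)) (hJ : J ⊆ fixSet b)
    (g : ↥(fixSet b \ J) → ↥J) (z : Fin n) (hz : z ∈ J) : extFun b J g z = z := by
  have hbz : b.1 z = z := mem_fixSet.1 (hJ hz)
  unfold extFun
  rw [dif_pos (by rwa [hbz])]
  exact hbz

lemma extFun_comp_b {n : ℕ} (b : PtdPart n) (J : Finset (Fin n))
    (g : ↥(fixSet b \ J) → ↥J) (x : Fin n) : extFun b J g (b.1 x) = extFun b J g x := by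
  unfold extFun
  simp only [b.2 x]

lemma extFun_left_aux {n : ℕ} (b : PtdPart n) (J : Finset (Fin n))
    (σ : PtdPart n) (hle : PtdPart.le b σ) (hfix : fixSet σ = J)
    (g : ↥(fixSet b \ J) → ↥J) (hg : ∀ y, (g y : Fin n) = σ.1 y.1) (x : Fin n) :
    extFun b J g x = σ.1 x := by
  unfold extFun
  split
  · rename_i h
    have h1 : σ.1 (b.1 x) = b.1 x := mem_fixSet.1 (by rw [hfix]; exact h)
    exact h1.symm.trans (hle.1 x)
  · rw [hg _]
    exact hle.1 x

/-- The fibre of the map `σ ↦ fixSet σ` over `J` inside the up-set of `b` is in bijection with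
maps `(fixSet b \ J) → J`. -/
noncomputable def countEquiv {n : ℕ} (b : PtdPart n) (J : Finset (Fin n)) (hJ : J ⊆ fixSet b) :
    {σ : PtdPart n // PtdPart.le b σ ∧ fixSet σ = J} ≃ (↥(fixSet b \ J) → ↥J) where
  toFun σ := fun x => ⟨σ.1.1 x.1, by
    have h1 : σ.1.1 x.1 ∈ fixSet σ.1 := apply_mem_fixSet σ.1 x.1
    rwa [σ.2.2] at h1⟩
  invFun g := ⟨⟨extFun b J g, fun x => extFun_fix b J hJ g _ (extFun_mem b J g x)⟩,
    ⟨⟨fun x => extFun_comp_b b J g x,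
      fun x hx => mem_fixSet.1 (hJ (hx ▸ extFun_mem b J g x))⟩,
      by
        ext z
        rw [mem_fixSet]
        constructor
        · intro hz
          exact hz ▸ extFun_mem b J g z
        · intro hz
          exact extFun_fix b J hJ g z hz⟩⟩
  left_inv := by
    intro σ
    apply Subtype.ext
    apply Subtype.ext
    funext x
    exact extFun_left_aux b J σ.1 σ.2.1 σ.2.2
      (fun y => ⟨σ.1.1 y.1, by
        have h1 : σ.1.1 y.1 ∈ fixSet σ.1 := apply_mem_fixSet σ.1 y.1
        rwa [σ.2.2] at h1⟩)
      (fun y => rfl) x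
  right_inv := by
    intro g
    funext x
    apply Subtype.ext
    show extFun b J g x.1 = (g x).1
    have hx1 : x.1 ∈ fixSet b := (Finset.mem_sdiff.1 x.2).1
    have hx2 : x.1 ∉ J := (Finset.mem_sdiff.1 x.2).2
    have hbx : b.1 x.1 = x.1 := mem_fixSet.1 hx1
    unfold extFun
    rw [dif_neg (by rwa [hbx])]
    congr 1
    apply congrArg g
    exact Subtype.ext hbx

lemma count_card {n : ℕ} (b : PtdPart n) (J : Finset (Fin n)) (hJ : J ⊆ fixSet b) :
    (univ.filter fun σ : PtdPart n => PtdPart.le b σ ∧ fixSet σ = J).card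
      = J.card ^ ((fixSet b).card - J.card) := by
  rw [← Fintype.card_subtype]
  rw [Fintype.card_congr (countEquiv b J hJ)]
  rw [Fintype.card_fun]
  rw [Fintype.card_coe, Fintype.card_coe, Finset.card_sdiff_of_subset hJ]

/-- Key lemma: the `ccZ`-weighted sum over the up-set of any `b` equals `1`. -/
lemma key_sum {n : ℕ} (hn : 1 ≤ n) (b : PtdPart n) :
    ∑ σ ∈ univ.filter (fun σ : PtdPart n => PtdPart.le b σ), ccZ (fixSet σ).card = 1 := by
  have hk1 : 1 ≤ (fixSet b).card :=
    Finset.card_pos.2 ⟨b.1 ⟨0, hn⟩, apply_mem_fixSet b ⟨0, hn⟩⟩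
  rw [← Finset.sum_fiberwise_of_maps_to (g := fixSet) (t := (fixSet b).powerset)
    (fun σ hσ => Finset.mem_powerset.2 (fixSet_subset_of_le (Finset.mem_filter.1 hσ).2))]
  have hInner : ∀ J ∈ (fixSet b).powerset,
      ∑ σ ∈ (univ.filter (fun σ : PtdPart n => PtdPart.le b σ)).filter (fun σ => fixSet σ = J),
        ccZ (fixSet σ).card
        = ((J.card : ℤ) ^ ((fixSet b).card - J.card) * ccZ J.card) := by
    intro J hJ
    have hJs : J ⊆ fixSet b := Finset.mem_powerset.1 hJ
    have hsum : ∀ σ ∈ (univ.filter (fun σ : PtdPart n => PtdPart.le b σ)).filter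
        (fun σ => fixSet σ = J), ccZ (fixSet σ).card = ccZ J.card := by
      intro σ hσ
      rw [(Finset.mem_filter.1 hσ).2]
    rw [Finset.sum_congr rfl hsum, Finset.sum_const, Finset.filter_filter]
    rw [count_card b J hJs]
    rw [nsmul_eq_mul]
    push_cast
    ring
  rw [Finset.sum_congr rfl hInner]
  rw [Finset.sum_powerset_apply_card (f := fun m => (m : ℤ) ^ ((fixSet b).card - m) * ccZ m)]
  have := abel_sum (fixSet b).card hk1
  rw [← this]
  apply Finset.sum_congr rfl
  intro m _
  rw [nsmul_eq_mul]
  ring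

/-- The Möbius number of the extended poset `Π̂^A_n` (obtained from `Π^A_n` by adjoining a
top element `1̂`) is `μ(0̂,1̂) = -Σ_{π ∈ Π^A_n} μ(0̂,π) = (-1)^n·(n-1)^(n-1)`.  Here `mu` is
the Möbius function `μ(0̂,·)` of `Π^A_n`, characterized by its defining recurrence. -/
theorem stmt19 (n : ℕ) (hn : 1 ≤ n) (mu : PtdPart n → ℤ)
    (h0 : mu (PtdPart.bot n) = 1)
    (hrec : ∀ b : PtdPart n, b ≠ PtdPart.bot n →
      ∑ a ∈ univ.filter (fun a : PtdPart n => PtdPart.le a b), mu a = 0) :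
    -∑ π : PtdPart n, mu π = (-1) ^ n * ((n : ℤ) - 1) ^ (n - 1) := by
  have hswap :
      ∑ σ : PtdPart n, (∑ a ∈ univ.filter (fun a : PtdPart n => PtdPart.le a σ), mu a) *
          ccZ (fixSet σ).card
        = ∑ a : PtdPart n, mu a *
            ∑ σ ∈ univ.filter (fun σ : PtdPart n => PtdPart.le a σ), ccZ (fixSet σ).card := by
    simp_rw [Finset.sum_filter, Finset.sum_mul, Finset.mul_sum]
    rw [Finset.sum_comm]
    apply Finset.sum_congr rfl
    intro a _
    apply Finset.sum_congr rfl
    intro σ _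
    by_cases h : PtdPart.le a σ <;> simp [h]
  have hRHS : ∑ a : PtdPart n, mu a *
      ∑ σ ∈ univ.filter (fun σ : PtdPart n => PtdPart.le a σ), ccZ (fixSet σ).card
        = ∑ a : PtdPart n, mu a := by
    apply Finset.sum_congr rfl
    intro a _
    rw [key_sum hn a, mul_one]
  have hLHS : ∑ σ : PtdPart n, (∑ a ∈ univ.filter (fun a : PtdPart n => PtdPart.le a σ), mu a) *
      ccZ (fixSet σ).card = ccZ n := by
    rw [Finset.sum_eq_single (PtdPart.bot n)]
    · have hfil : univ.filter (fun a : PtdPart n => PtdPart.le a (PtdPart.bot n))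
          = {PtdPart.bot n} := by
        ext a
        simp [le_bot_iff' a]
      rw [hfil, Finset.sum_singleton, h0, one_mul]
      have hfix : fixSet (PtdPart.bot n) = univ := by
        ext x
        simp [fixSet, PtdPart.bot]
      rw [hfix, Finset.card_univ, Fintype.card_fin]
    · intro σ _ hσ
      rw [hrec σ hσ, zero_mul]
    · intro h
      exact absurd (Finset.mem_univ _) h
  have hmu : ∑ a : PtdPart n, mu a = ccZ n := by
    rw [← hLHS, hswap, hRHS]
  rw [hmu]
  unfold ccZ
  obtain ⟨m, rfl⟩ : ∃ m, n = m + 1 := ⟨n - 1, by omega⟩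
  have h1 : (1 - ((m + 1 : ℕ) : ℤ)) = -(((m + 1 : ℕ) : ℤ) - 1) := by ring
  rw [h1, neg_pow]
  simp only [Nat.add_sub_cancel]
  rw [pow_succ]
  ring
end
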